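/- Let R be a finite reduced crystallographic root system with a fixed base S of simple roots, let I ⊆ S, and let α ∈ S \ I. Then ∑_{β ∈ R⁺ \ R_I} ⟨β, α∨⟩ > 0; that is, the coefficient b_α of the colour divisor D_α in the anticanonical divisor of the corresponding flag variety is a positive integer. -/

import Mathlib

open scoped RealInnerProductSpace Classical

noncomputable section

/-- The crystallographic pairing `⟨β, α∨⟩ = 2(β,α)/(α,α)`. -/
def cpair {V : Type*} [NormedAddCommGroup V] [InnerProductSpace ℝ V] (β α : V) : ℝ :=
  2 * ⟪β, α⟫ / ⟪α, α⟫

/-- A finite reduced crystallographic root system `R` in a real inner product space,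
together with a fixed base `S` of simple roots. -/
structure RootSystemWithBase (V : Type*) [NormedAddCommGroup V] [InnerProductSpace ℝ V] where
  /-- The (finite) set of roots. -/
  R : Finset V
  /-- The base of simple roots. -/
  S : Finset V
  S_subset : S ⊆ R
  zero_not_mem : (0 : V) ∉ R
  /-- `R` is stable under the reflection associated to each root. -/
  reflect_mem : ∀ α ∈ R, ∀ β ∈ R, β - cpair β α • α ∈ R
  /-- The root system is crystallographic: all pairings are integers. -/
  crystallographic : ∀ α ∈ R, ∀ β ∈ R, ∃ n : ℤ, cpair β α = (n : ℝ)
  /-- The root system is reduced: the only multiples of a root that are roots are `±` itself. -/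
  reduced : ∀ α ∈ R, ∀ t : ℝ, t • α ∈ R → t = 1 ∨ t = -1
  /-- The simple roots are linearly independent. -/
  indep : LinearIndependent ℝ (fun s : S => (s : V))
  /-- Every root is a nonnegative or nonpositive integer combination of simple roots. -/
  base_expand : ∀ β ∈ R, β ∈ AddSubmonoid.closure (S : Set V) ∨
    -β ∈ AddSubmonoid.closure (S : Set V)

namespace RootSystemWithBase

variable {V : Type*} [NormedAddCommGroup V] [InnerProductSpace ℝ V]

/-- The positive roots `R⁺` determined by the base `S`. -/
def posRoots (P : RootSystemWithBase V) : Finset V :=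
  P.R.filter (fun β => β ∈ AddSubmonoid.closure (P.S : Set V))

/-- For `I ⊆ S`, the set `R_I` of roots lying in the `ℤ`-span of `I`. -/
def rootsIn (P : RootSystemWithBase V) (I : Finset V) : Finset V :=
  P.R.filter (fun β => β ∈ Submodule.span ℤ (I : Set V))

/-- The root system is irreducible: it is not the orthogonal direct sum of two nonempty
root subsystems (equivalently, its Dynkin diagram is connected). -/
def IsIrreducible (P : RootSystemWithBase V) : Prop :=
  ∀ R₁ R₂ : Finset V, R₁ ∪ R₂ = P.R → R₁.Nonempty → R₂.Nonempty →
    (∀ a ∈ R₁, ∀ b ∈ R₂, ⟪a, b⟫ = 0) → False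

end RootSystemWithBase

open RootSystemWithBase

/-! Since the reflection `s_α` permutes `R⁺ \ {α}` and negates `⟨·, α∨⟩`, all terms of
`∑_{β ∈ R⁺} ⟨β, α∨⟩` except `⟨α, α∨⟩ = 2` cancel in pairs. A root `β ∈ R⁺ ∩ R_I` has
`α`-coordinate `0`, so `⟨β, α∨⟩` is minus the `α`-coordinate of the positive root `s_α β`, hence
`≤ 0`. Removing these terms leaves a sum over `R⁺ \ R_I` that is at least `2`. -/

section Reflection

variable {V : Type*} [NormedAddCommGroup V] [InnerProductSpace ℝ V]

def reflect (α β : V) : V := β - cpair β α • α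

lemma cpair_sub_left (x y α : V) : cpair (x - y) α = cpair x α - cpair y α := by
  unfold cpair; rw [inner_sub_left]; ring

lemma cpair_smul_left (c : ℝ) (x α : V) : cpair (c • x) α = c * cpair x α := by
  unfold cpair; rw [real_inner_smul_left]; ring

lemma cpair_self {α : V} (h : α ≠ 0) : cpair α α = 2 := by
  have : ⟪α, α⟫ ≠ 0 := fun hz => h (inner_self_eq_zero.mp hz)
  unfold cpair; field_simp

variable {α : V}

lemma reflect_self (h : α ≠ 0) : reflect α α = -α := by
  rw [reflect, cpair_self h]; module

lemma cpair_reflect (h : α ≠ 0) (β : V) : cpair (reflect α β) α = -cpair β α := by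
  rw [reflect, cpair_sub_left, cpair_smul_left, cpair_self h]; ring

lemma reflect_reflect (h : α ≠ 0) (β : V) : reflect α (reflect α β) = β := by
  rw [reflect, cpair_reflect h, reflect]; module

lemma reflect_ne_self (h : α ≠ 0) {β : V} (hβ : cpair β α ≠ 0) : reflect α β ≠ β := by
  rw [reflect, Ne, sub_eq_self, smul_eq_zero, not_or]
  exact ⟨hβ, h⟩

lemma sum_cpair_eq_zero_of_reflect_mem (h : α ≠ 0) {s : Finset V}
    (hs : ∀ β ∈ s, reflect α β ∈ s) : ∑ β ∈ s, cpair β α = 0 :=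
  Finset.sum_involution (fun β _ => reflect α β) (fun β _ => by rw [cpair_reflect h]; ring)
    (fun _ _ => reflect_ne_self h) hs (fun β _ => reflect_reflect h β)

end Reflection

namespace RootSystemWithBase

variable {V : Type*} [NormedAddCommGroup V] [InnerProductSpace ℝ V] (P : RootSystemWithBase V)

def coord (s : P.S) : V →ₗ[ℝ] ℝ :=
  (Module.Basis.extend P.indep).coord ⟨s, Module.Basis.subset_extend P.indep s.2⟩

lemma coord_apply_simple (s t : P.S) : P.coord s t = if t = s then 1 else 0 := by
  rw [coord, ← Module.Basis.extend_apply_self P.indep ⟨t, Module.Basis.subset_extend P.indep t.2⟩,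
    Module.Basis.coord_apply, Module.Basis.repr_self, Finsupp.single_apply]
  simp only [Subtype.ext_iff]

variable {P}

lemma coord_self (s : P.S) : P.coord s s = 1 := by
  rw [coord_apply_simple, if_pos rfl]

lemma coord_of_ne {s t : P.S} (h : (t : V) ≠ s) : P.coord s t = 0 := by
  rw [coord_apply_simple, if_neg (fun hts => h (congrArg Subtype.val hts))]

lemma coord_nonneg (s : P.S) {v : V} (hv : v ∈ AddSubmonoid.closure (P.S : Set V)) :
    0 ≤ P.coord s v := by
  induction hv using AddSubmonoid.closure_induction with
  | mem x hx =>
    rw [show x = ((⟨x, hx⟩ : P.S) : V) from rfl, coord_apply_simple]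
    split_ifs <;> norm_num
  | zero => simp
  | add x y _ _ hx hy => rw [map_add]; exact add_nonneg hx hy

lemma sum_coord_smul {v : V} (hv : v ∈ AddSubmonoid.closure (P.S : Set V)) :
    ∑ s : P.S, P.coord s v • (s : V) = v := by
  induction hv using AddSubmonoid.closure_induction with
  | mem x hx =>
    let x' : P.S := ⟨x, hx⟩
    rw [Finset.sum_eq_single_of_mem x' (Finset.mem_univ _)
      fun s _ hs => by rw [coord_of_ne fun h => hs (Subtype.ext h.symm), zero_smul]]
    rw [coord_self x', one_smul]
  | zero => simp
  | add x y _ _ hx hy => simp only [map_add, add_smul, Finset.sum_add_distrib, hx, hy]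

lemma coord_eq_zero_of_mem_span {I : Finset V} (hI : I ⊆ P.S) {s : P.S} (hs : (s : V) ∉ I)
    {v : V} (hv : v ∈ Submodule.span ℤ (I : Set V)) : P.coord s v = 0 := by
  induction hv using Submodule.span_induction with
  | mem x hx => exact coord_of_ne (t := ⟨x, hI hx⟩) fun h => hs (h ▸ hx)
  | zero => simp
  | add x y _ _ hx hy => rw [map_add, hx, hy, add_zero]
  | smul n x _ hx => rw [map_zsmul, hx, smul_zero]

lemma mem_posRoots {β : V} :
    β ∈ P.posRoots ↔ β ∈ P.R ∧ β ∈ AddSubmonoid.closure (P.S : Set V) :=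
  Finset.mem_filter

lemma ne_zero_of_mem_S {α : V} (hα : α ∈ P.S) : α ≠ 0 :=
  fun h => P.zero_not_mem (h ▸ P.S_subset hα)

variable {α β : V}

lemma exists_coord_pos_of_ne (hα : α ∈ P.S) (hβ : β ∈ P.posRoots) (hne : β ≠ α) :
    ∃ s : P.S, (s : V) ≠ α ∧ 0 < P.coord s β := by
  obtain ⟨hβR, hβ⟩ := mem_posRoots.mp hβ
  by_contra! hcon
  have hβα : β = P.coord ⟨α, hα⟩ β • α := by
    conv_lhs => rw [← sum_coord_smul hβ]
    refine Finset.sum_eq_single_of_mem (⟨α, hα⟩ : P.S) (Finset.mem_univ _) fun s _ hs => ?_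
    rw [le_antisymm (hcon s fun h => hs (Subtype.ext h)) (coord_nonneg s hβ), zero_smul]
  rcases P.reduced α (P.S_subset hα) _ (by rw [← hβα]; exact hβR) with h | h
  · exact hne (by rw [hβα, h, one_smul])
  · have := coord_nonneg ⟨α, hα⟩ hβ
    linarith

lemma coord_reflect_of_ne (hα : α ∈ P.S) {s : P.S} (hs : (s : V) ≠ α) :
    P.coord s (reflect α β) = P.coord s β := by
  rw [reflect, map_sub, map_smul, coord_of_ne (t := ⟨α, hα⟩) hs.symm, smul_zero, sub_zero]

lemma coord_reflect_self (hα : α ∈ P.S) :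
    P.coord ⟨α, hα⟩ (reflect α β) = P.coord ⟨α, hα⟩ β - cpair β α := by
  rw [reflect, map_sub, map_smul, coord_self, smul_eq_mul, mul_one]

lemma reflect_mem_posRoots (hα : α ∈ P.S) (hβ : β ∈ P.posRoots) (hne : β ≠ α) :
    reflect α β ∈ P.posRoots := by
  have hR : reflect α β ∈ P.R := P.reflect_mem α (P.S_subset hα) β (mem_posRoots.mp hβ).1
  refine mem_posRoots.mpr ⟨hR, (P.base_expand _ hR).resolve_right fun hneg => ?_⟩
  obtain ⟨s, hs, hpos⟩ := exists_coord_pos_of_ne hα hβ hne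
  have := coord_nonneg s hneg
  rw [map_neg, coord_reflect_of_ne hα hs] at this
  linarith

lemma reflect_mem_posRoots_erase (hα : α ∈ P.S) (hβ : β ∈ P.posRoots.erase α) :
    reflect α β ∈ P.posRoots.erase α := by
  obtain ⟨hne, hβ⟩ := Finset.mem_erase.mp hβ
  refine Finset.mem_erase.mpr ⟨fun h => ?_, reflect_mem_posRoots hα hβ hne⟩
  have h0 := ne_zero_of_mem_S hα
  have hβα : β = -α := by rw [← reflect_reflect h0 β, h, reflect_self h0]
  have := coord_nonneg ⟨α, hα⟩ (mem_posRoots.mp hβ).2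
  rw [hβα, map_neg, coord_self] at this
  linarith

lemma sum_posRoots_cpair (hα : α ∈ P.S) : ∑ β ∈ P.posRoots, cpair β α = 2 := by
  have h0 := ne_zero_of_mem_S hα
  have hαpos : α ∈ P.posRoots :=
    mem_posRoots.mpr ⟨P.S_subset hα, AddSubmonoid.subset_closure hα⟩
  rw [← Finset.add_sum_erase _ _ hαpos, cpair_self h0,
    sum_cpair_eq_zero_of_reflect_mem h0 fun β => reflect_mem_posRoots_erase hα, add_zero]

lemma cpair_nonpos_of_mem_rootsIn {I : Finset V} (hI : I ⊆ P.S) (hα : α ∈ P.S \ I)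
    (hβ : β ∈ P.posRoots) (hβI : β ∈ P.rootsIn I) : cpair β α ≤ 0 := by
  obtain ⟨hαS, hαI⟩ := Finset.mem_sdiff.mp hα
  have hβ0 : P.coord ⟨α, hαS⟩ β = 0 :=
    coord_eq_zero_of_mem_span hI hαI (Finset.mem_filter.mp hβI).2
  have hne : β ≠ α := by
    rintro rfl
    rw [coord_self] at hβ0
    exact one_ne_zero hβ0
  have := coord_nonneg ⟨α, hαS⟩ (mem_posRoots.mp (reflect_mem_posRoots hαS hβ hne)).2
  rw [coord_reflect_self, hβ0] at this
  linarith

end RootSystemWithBase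

/-- If `I ⊆ S` and `α ∈ S \ I`, then
`∑_{β ∈ R⁺ \ R_I} ⟨β, α∨⟩ > 0`, i.e. the coefficient `b_α` of the colour divisor `D_α` in the
anticanonical divisor of the corresponding flag variety is a positive integer. -/
theorem anticanonical_coefficient_pos {V : Type*} [NormedAddCommGroup V] [InnerProductSpace ℝ V]
    (P : RootSystemWithBase V) (I : Finset V) (hI : I ⊆ P.S) (α : V) (hα : α ∈ P.S \ I) :
    0 < ∑ β ∈ P.posRoots \ P.rootsIn I, cpair β α := by
  have hsplit : ∑ β ∈ P.posRoots \ P.rootsIn I, cpair β α =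
      ∑ β ∈ P.posRoots, cpair β α - ∑ β ∈ P.posRoots ∩ P.rootsIn I, cpair β α := by
    rw [← Finset.sdiff_inter_self_left, Finset.sum_sdiff_eq_sub Finset.inter_subset_left]
  have hnonpos : ∑ β ∈ P.posRoots ∩ P.rootsIn I, cpair β α ≤ 0 :=
    Finset.sum_nonpos fun β hβ =>
      cpair_nonpos_of_mem_rootsIn hI hα (Finset.mem_inter.mp hβ).1 (Finset.mem_inter.mp hβ).2
  rw [hsplit, sum_posRoots_cpair (Finset.mem_sdiff.mp hα).1]
  linarith
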